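/- In the surface code row-extension circuit, the subroutine in which an ancilla initialized in |0⟩ is the target of CNOTs from four data qubits 1,2,3,4 followed by a CNOT from the ancilla to qubit 4 implements a map that, for any input state of the data qubits, produces an output state satisfying Z_1 Z_2 Z_3 Z_4 ρ_out = ρ_out, i.e., the Z-type plaquette stabilizer is set to +1 deterministically. -/
import Mathlib


open scoped ComplexOrder
open Matrix

noncomputable section

/-- Computational-basis configurations of 5 qubits (data qubits `0,1,2,3` and ancilla `4`). -/
abbrev Cfg := Fin 5 → ZMod 2

/-- The CNOT gate with control `c` and target `t`, as a matrix in the computational basis: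
`|x⟩ ↦ |x with x_t replaced by x_t + x_c⟩`. -/
def cnot (c t : Fin 5) : Matrix Cfg Cfg ℂ :=
  Matrix.of fun x y => if x = Function.update y t (y t + y c) then 1 else 0

/-- The subroutine: CNOTs from each of the four data qubits into the ancilla, followed by a
CNOT from the ancilla back onto data qubit `4` (index `3`).  Matrix product order is: the
rightmost factor acts first. -/
def subroutine : Matrix Cfg Cfg ℂ :=
  cnot 4 3 * (cnot 3 4 * (cnot 2 4 * (cnot 1 4 * cnot 0 4)))

/-- A density matrix: positive semidefinite with unit trace. -/
def IsDensity {d : Type*} [Fintype d] [DecidableEq d] (ρ : Matrix d d ℂ) : Prop :=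
  ρ.PosSemidef ∧ ρ.trace = 1

/-- Embed a state of the data qubits, with the ancilla initialized in `|0⟩⟨0|`. -/
def embedIn (ρ : Matrix (Fin 4 → ZMod 2) (Fin 4 → ZMod 2) ℂ) : Matrix Cfg Cfg ℂ :=
  Matrix.of fun x y =>
    if x 4 = 0 ∧ y 4 = 0 then ρ (fun i => x i.castSucc) (fun i => y i.castSucc) else 0

/-- The output state of the subroutine: apply the circuit unitary and trace out the ancilla. -/
def outState (ρ : Matrix (Fin 4 → ZMod 2) (Fin 4 → ZMod 2) ℂ) :
    Matrix (Fin 4 → ZMod 2) (Fin 4 → ZMod 2) ℂ :=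
  Matrix.of fun x y => ∑ aa : ZMod 2,
    (subroutine * embedIn ρ * subroutineᴴ) (Fin.snoc x aa) (Fin.snoc y aa)

/-- The stabilizer `Z₁Z₂Z₃Z₄` on the four data qubits, as a diagonal matrix. -/
def Zstab : Matrix (Fin 4 → ZMod 2) (Fin 4 → ZMod 2) ℂ :=
  Matrix.of fun x y => if x = y then (if x 0 + x 1 + x 2 + x 3 = 0 then 1 else -1) else 0

/-! ### Auxiliary machinery -/

/-- The classical map implemented by a CNOT. -/
def cnotMap (c t : Fin 5) (y : Cfg) : Cfg := Function.update y t (y t + y c)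

/-- Indicator (permutation-style) matrix of a map on configurations. -/
def indmat (f : Cfg → Cfg) : Matrix Cfg Cfg ℂ := Matrix.of fun x y => if x = f y then 1 else 0

/-- The classical map implemented by the whole subroutine. -/
def subMap : Cfg → Cfg := cnotMap 4 3 ∘ cnotMap 3 4 ∘ cnotMap 2 4 ∘ cnotMap 1 4 ∘ cnotMap 0 4

lemma indmat_mul (f g : Cfg → Cfg) : indmat f * indmat g = indmat (f ∘ g) := by
  ext x y
  simp [indmat, Matrix.mul_apply]

lemma sub_eq : subroutine = indmat subMap := by
  have h : ∀ c t, cnot c t = indmat (cnotMap c t) := fun c t => rfl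
  rw [subroutine, h, h, h, h, h, indmat_mul, indmat_mul, indmat_mul, indmat_mul, subMap]

lemma subMap_parity (z : Cfg) (hz : z 4 = 0) :
    subMap z 0 + subMap z 1 + subMap z 2 + subMap z 3 = 0 := by
  simp only [subMap, cnotMap, Function.comp_apply]
  simp (config := { decide := true }) only [Function.update]
  simp only [dite_true, dite_false]
  have key : ∀ a b c d e : ZMod 2, e = 0 → a + b + c + (d + (e + a + b + c + d)) = 0 := by
    decide
  exact key _ _ _ _ _ hz

lemma snoc_parity (x : Fin 4 → ZMod 2) (aa : ZMod 2) :
    (Fin.snoc x aa : Cfg) 0 + (Fin.snoc x aa : Cfg) 1 + (Fin.snoc x aa : Cfg) 2 +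
      (Fin.snoc x aa : Cfg) 3 = x 0 + x 1 + x 2 + x 3 := by
  rw [show (0 : Fin 5) = Fin.castSucc 0 from rfl, show (1 : Fin 5) = Fin.castSucc 1 from rfl,
    show (2 : Fin 5) = Fin.castSucc 2 from rfl, show (3 : Fin 5) = Fin.castSucc 3 from rfl,
    Fin.snoc_castSucc, Fin.snoc_castSucc, Fin.snoc_castSucc, Fin.snoc_castSucc]

lemma outState_eq_zero (ρ : Matrix (Fin 4 → ZMod 2) (Fin 4 → ZMod 2) ℂ)
    (x y : Fin 4 → ZMod 2) (h : x 0 + x 1 + x 2 + x 3 ≠ 0) : outState ρ x y = 0 := by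
  simp only [outState, Matrix.of_apply]
  apply Finset.sum_eq_zero
  intro aa _
  rw [Matrix.mul_apply]
  apply Finset.sum_eq_zero
  intro w _
  have hAB : (subroutine * embedIn ρ) (Fin.snoc x aa) w = 0 := by
    rw [Matrix.mul_apply]
    apply Finset.sum_eq_zero
    intro z _
    by_cases hz : z 4 = 0
    · by_cases hp : (Fin.snoc x aa : Cfg) = subMap z
      · exfalso
        apply h
        have hP := subMap_parity z hz
        rw [← hp] at hP
        rwa [snoc_parity] at hP
      · rw [sub_eq]
        simp [indmat, hp]
    · simp [embedIn, hz]
  rw [hAB, zero_mul]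


/-- for any input state of the data qubits, the output of the subroutine
(ancilla initialized to `|0⟩`, four CNOTs into the ancilla, a correcting CNOT onto qubit 4,
then discarding the ancilla) lies in the `+1` eigenspace of the `Z`-type plaquette
stabilizer: `Z₁Z₂Z₃Z₄ ρ_out = ρ_out`. -/
theorem subroutine_sets_Z_stabilizer
    (ρ : Matrix (Fin 4 → ZMod 2) (Fin 4 → ZMod 2) ℂ) (hρ : IsDensity ρ) :
    Zstab * outState ρ = outState ρ := by
  ext x y
  rw [Matrix.mul_apply, Finset.sum_eq_single x]
  · by_cases h : x 0 + x 1 + x 2 + x 3 = 0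
    · simp [Zstab, h]
    · rw [outState_eq_zero ρ x y h]
      simp [Zstab]
  · intro u _ hu
    simp [Zstab, (Ne.symm hu : x ≠ u)]
  · intro hx
    exact absurd (Finset.mem_univ x) hx
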